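/- arXiv:0811.1221 — 5 statements merged into one kernel-verified Lean document; each statement's English description precedes it below -/
import Mathlib

section
/- For a probability distribution P on a finite set X and α > 1, the ε-smooth min-entropy satisfies H_min^ε(X) ≥ H_α(X) − (1/(α−1))·log(1/ε), where H_α(X) = (1/(1−α))·log(Σ_x P(x)^α), H_min of a subnormalized distribution Q is −log max_x Q(x), and H_min^ε(X) is the maximum of H_min(Q) over subnormalized distributions Q with Q ≤ P pointwise and Σ_x (P(x) − Q(x)) ≤ ε. -/
/-!
Cut `P` off at the threshold `t = (∑ₓ P(x)^α / ε)^(1/(α-1))`, i.e. keep `P(x)` only where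
`P(x) ≤ t`. The removed mass is controlled by a Markov-type bound: every discarded point has
`P(x) ≤ P(x)^α / t^(α-1)`, so the total loss is at most `∑ₓ P(x)^α / t^(α-1) = ε`. The truncated
distribution has maximum at most `t`, and `-log t` is exactly `H_α(X) - (1/(α-1)) log(1/ε)`.
-/

open Finset

open scoped NNReal

lemma Real.le_rpow_div_rpow_sub_one {p t α : ℝ} (ht : 0 < t) (htp : t ≤ p) (hα : 1 ≤ α) :
    p ≤ p ^ α / t ^ (α - 1) := by
  have hp : 0 < p := ht.trans_le htp
  rw [le_div_iff₀ (by positivity)]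
  calc p * t ^ (α - 1) ≤ p * p ^ (α - 1) := by gcongr
    _ = p ^ α := by rw [Real.rpow_sub_one hp.ne', mul_div_cancel₀ _ hp.ne']

section Truncation

variable {X : Type*}

noncomputable def truncate (P : X → ℝ≥0) (t : ℝ≥0) : X → ℝ≥0 :=
  fun x => if P x ≤ t then P x else 0

lemma truncate_le (P : X → ℝ≥0) (t : ℝ≥0) (x : X) : truncate P t x ≤ P x := by
  unfold truncate
  split_ifs <;> simp

lemma sup_truncate_le [Fintype X] (P : X → ℝ≥0) (t : ℝ≥0) : univ.sup (truncate P t) ≤ t :=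
  Finset.sup_le fun x _ => by
    unfold truncate
    split_ifs with h
    · exact h
    · exact zero_le

lemma sum_truncate_le [Fintype X] (P : X → ℝ≥0) (t : ℝ≥0) : ∑ x, truncate P t x ≤ ∑ x, P x :=
  sum_le_sum fun x _ => truncate_le P t x

lemma coe_sub_truncate_le (P : X → ℝ≥0) {t : ℝ≥0} (ht : 0 < t) {α : ℝ} (hα : 1 ≤ α) (x : X) :
    (P x : ℝ) - truncate P t x ≤ (P x : ℝ) ^ α / (t : ℝ) ^ (α - 1) := by
  unfold truncate
  split_ifs with h
  · rw [sub_self]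
    positivity
  · rw [NNReal.coe_zero, sub_zero]
    exact Real.le_rpow_div_rpow_sub_one ht (le_of_lt (not_le.mp h)) hα

lemma sum_sub_truncate_le [Fintype X] (P : X → ℝ≥0) {t : ℝ≥0} (ht : 0 < t) {α : ℝ} (hα : 1 ≤ α) :
    ∑ x, ((P x : ℝ) - truncate P t x) ≤ (∑ x, (P x : ℝ) ^ α) / (t : ℝ) ^ (α - 1) := by
  rw [sum_div]
  exact sum_le_sum fun x _ => coe_sub_truncate_le P ht hα x

end Truncation

lemma sup_pos_of_sum_sub_lt_sum {X : Type*} [Fintype X] {P Q : X → ℝ≥0}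
    (h : ∑ x, ((P x : ℝ) - Q x) < ∑ x, (P x : ℝ)) : 0 < univ.sup Q := by
  refine pos_iff_ne_zero.mpr fun hQ => h.ne ?_
  have hQ0 : ∀ x, Q x = 0 := fun x => (Finset.sup_eq_bot_iff Q univ).mp hQ x (mem_univ x)
  simp [hQ0]

lemma sum_rpow_pos {X : Type*} [Fintype X] {P : X → ℝ≥0} (hP : ∑ x, P x ≠ 0) (α : ℝ) :
    0 < ∑ x, (P x : ℝ) ^ α := by
  obtain ⟨x, -, hx⟩ := exists_ne_zero_of_sum_ne_zero hP
  exact sum_pos' (fun x _ => by positivity) ⟨x, mem_univ x, by positivity⟩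

lemma Real.neg_logb_div_rpow_inv {b K ε α : ℝ} (hK : 0 < K) (hε : 0 < ε) (hα : α ≠ 1) :
    -Real.logb b ((K / ε) ^ (α - 1)⁻¹) =
      1 / (1 - α) * Real.logb b K - 1 / (α - 1) * Real.logb b (1 / ε) := by
  have h1 : α - 1 ≠ 0 := sub_ne_zero.mpr hα
  have h2 : 1 - α ≠ 0 := sub_ne_zero.mpr hα.symm
  rw [Real.logb_rpow_eq_mul_logb_of_pos (by positivity), Real.logb_div hK.ne' hε.ne', one_div ε,
    Real.logb_inv]
  field_simp
  ring

/-- Classical smooth min-entropy bound via Rényi entropies: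
`H_min^ε(X) ≥ H_α(X) − (1/(α−1))·log(1/ε)` for `α > 1`. -/
theorem classical_smooth_min_entropy_bound {X : Type*} [Fintype X]
    (P : X → NNReal) (hP : ∑ x, P x = 1)
    (ε : ℝ) (hε : ε ∈ Set.Ioo (0 : ℝ) 1) (α : ℝ) (hα : 1 < α) :
    ∃ Q : X → NNReal,
      (∑ x, Q x ≤ 1) ∧ (∀ x, Q x ≤ P x) ∧ (∑ x, ((P x : ℝ) - (Q x : ℝ)) ≤ ε) ∧
      (- Real.logb 2 ((Finset.univ.sup Q : NNReal) : ℝ) ≥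
        (1 / (1 - α)) * Real.logb 2 (∑ x, (P x : ℝ) ^ α)
          - (1 / (α - 1)) * Real.logb 2 (1 / ε)) := by
  obtain ⟨hε0, hε1⟩ := hε
  have hK := sum_rpow_pos (hP.trans_ne one_ne_zero) α
  set K := ∑ x, (P x : ℝ) ^ α
  set t : ℝ≥0 := ⟨(K / ε) ^ (α - 1)⁻¹, by positivity⟩
  have ht_coe : (t : ℝ) = (K / ε) ^ (α - 1)⁻¹ := rfl
  have ht : 0 < t := by rw [← NNReal.coe_pos, ht_coe]; positivity
  have hloss : ∑ x, ((P x : ℝ) - truncate P t x) ≤ ε := by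
    calc _ ≤ K / (t : ℝ) ^ (α - 1) := sum_sub_truncate_le P ht hα.le
      _ = ε := by
        rw [ht_coe, Real.rpow_inv_rpow (by positivity) (by linarith)]
        field_simp
  -- needed because of the junk value `logb 2 0 = 0`
  have hsup : 0 < univ.sup (truncate P t) := by
    apply sup_pos_of_sum_sub_lt_sum
    rw [← NNReal.coe_sum, hP, NNReal.coe_one]
    linarith
  refine ⟨truncate P t, hP ▸ sum_truncate_le P t, truncate_le P t, hloss, ?_⟩
  rw [← Real.neg_logb_div_rpow_inv hK hε0 hα.ne', ge_iff_le, neg_le_neg_iff]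
  exact Real.logb_le_logb_of_le one_lt_two (NNReal.coe_pos.mpr hsup)
    (NNReal.coe_le_coe.mpr (sup_truncate_le P t))
end

section
/- Quantum min-entropy smoothing bound (commutative/diagonal case): let p, q : X → ℝ≥0 with Σ p = 1, Σ q = 1 (q a reference distribution), and λ > 0. Define Δ(x) = max(p(x) − λ·q(x), 0) and ε = √(2·Σ_x Δ(x)). Then there exists a subnormalized distribution p̃ with p̃(x) ≤ λ·q(x) for all x and fidelity F(p, p̃) = Σ_x √(p(x)·p̃(x)) satisfying √(1 − F(p,p̃)²) ≤ ε. -/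
/-- Smooth min-entropy estimate (commutative case): for distributions `p, q` and `λ > 0`,
there is a subnormalized `p̃ ≤ λ·q` whose purified distance to `p` is at most
`√(2·Σ_x max(p(x) − λq(x), 0))`. -/
theorem smooth_min_entropy_estimate_classical {X : Type*} [Fintype X]
    (p q : X → NNReal) (hp : ∑ x, p x = 1) (hq : ∑ x, q x = 1)
    (lam : ℝ) (hlam : 0 < lam) :
    ∃ pt : X → NNReal,
      (∑ x, pt x ≤ 1) ∧ (∀ x, (pt x : ℝ) ≤ lam * (q x : ℝ)) ∧
      Real.sqrt (1 - (∑ x, Real.sqrt ((p x : ℝ) * (pt x : ℝ))) ^ 2) ≤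
        Real.sqrt (2 * ∑ x, max ((p x : ℝ) - lam * (q x : ℝ)) 0) := by
  set pt : X → NNReal := fun x => p x ⊓ (lam.toNNReal * q x) with hptdef
  have hlr : (lam.toNNReal : ℝ) = lam := Real.coe_toNNReal _ hlam.le
  have hpt_le_p : ∀ x, pt x ≤ p x := fun x => inf_le_left
  have hpt_le_lq : ∀ x, (pt x : ℝ) ≤ lam * (q x : ℝ) := by
    intro x
    have h : pt x ≤ lam.toNNReal * q x := inf_le_right
    calc (pt x : ℝ) ≤ ((lam.toNNReal * q x : NNReal) : ℝ) := by exact_mod_cast h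
      _ = lam * q x := by push_cast [hlr]; ring
  refine ⟨pt, ?_, hpt_le_lq, ?_⟩
  · calc ∑ x, pt x ≤ ∑ x, p x := Finset.sum_le_sum fun x _ => hpt_le_p x
      _ = 1 := hp
  · set F : ℝ := ∑ x, Real.sqrt ((p x : ℝ) * (pt x : ℝ)) with hF
    have hterm_le : ∀ x, Real.sqrt ((p x : ℝ) * (pt x : ℝ)) ≤ (p x : ℝ) := by
      intro x
      have h : (p x : ℝ) * (pt x : ℝ) ≤ (p x : ℝ) * (p x : ℝ) :=
        mul_le_mul_of_nonneg_left (by exact_mod_cast hpt_le_p x) (p x).coe_nonneg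
      calc Real.sqrt ((p x : ℝ) * (pt x : ℝ)) ≤ Real.sqrt ((p x : ℝ) * (p x : ℝ)) :=
            Real.sqrt_le_sqrt h
        _ = (p x : ℝ) := by rw [Real.sqrt_mul_self (p x).coe_nonneg]
    have hterm_ge : ∀ x, (pt x : ℝ) ≤ Real.sqrt ((p x : ℝ) * (pt x : ℝ)) := by
      intro x
      have h : (pt x : ℝ) * (pt x : ℝ) ≤ (p x : ℝ) * (pt x : ℝ) :=
        mul_le_mul_of_nonneg_right (by exact_mod_cast hpt_le_p x) (pt x).coe_nonneg
      calc (pt x : ℝ) = Real.sqrt ((pt x : ℝ) * (pt x : ℝ)) := by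
            rw [Real.sqrt_mul_self (pt x).coe_nonneg]
        _ ≤ _ := Real.sqrt_le_sqrt h
    have hF_le_one : F ≤ 1 := by
      calc F ≤ ∑ x, (p x : ℝ) := Finset.sum_le_sum fun x _ => hterm_le x
        _ = 1 := by exact_mod_cast congrArg NNReal.toReal hp
    have hF_nonneg : 0 ≤ F :=
      Finset.sum_nonneg fun x _ => Real.sqrt_nonneg _
    have hD : ∑ x, max ((p x : ℝ) - lam * (q x : ℝ)) 0 = ∑ x, ((p x : ℝ) - (pt x : ℝ)) := by
      apply Finset.sum_congr rfl
      intro x _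
      have hc : (pt x : ℝ) = min (p x : ℝ) (lam * (q x : ℝ)) := by
        simp [hptdef, NNReal.coe_min, hlr]
      rw [hc]
      rcases le_total ((p x : ℝ)) (lam * (q x : ℝ)) with h | h
      · rw [min_eq_left h, max_eq_right (by linarith), sub_self]
      · rw [min_eq_right h, max_eq_left (by linarith)]
    have hsum_pt : 1 - ∑ x, max ((p x : ℝ) - lam * (q x : ℝ)) 0 = ∑ x, (pt x : ℝ) := by
      rw [hD, Finset.sum_sub_distrib]
      have h1 : ∑ x, (p x : ℝ) = 1 := by exact_mod_cast congrArg NNReal.toReal hp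
      rw [h1]; ring
    have hF_ge : 1 - ∑ x, max ((p x : ℝ) - lam * (q x : ℝ)) 0 ≤ F := by
      rw [hsum_pt]
      exact Finset.sum_le_sum fun x _ => hterm_ge x
    apply Real.sqrt_le_sqrt
    nlinarith [sq_nonneg (1 - F)]
end

section
/- Classical data processing for Rényi divergences via stochastic maps, α ∈ (1,2]: for probability distributions p, q on finite X and a stochastic matrix T from X to Y (columns sum to 1 over Y... i.e., T(y|x) ≥ 0, Σ_y T(y|x) = 1), Σ_y (Tp)(y)^α (Tq)(y)^{1−α} ≤ Σ_x p(x)^α q(x)^{1−α}, where (Tp)(y) = Σ_x T(y|x)p(x), assuming q(x) > 0 for all x and (Tq)(y) > 0 for all y. -/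
/-!
Write `f(t) = t ^ α`, convex on `[0, ∞)` for `α ≥ 1`, so that `a ^ α * b ^ (1 - α) = b * f (a / b)`
is the perspective of `f`. Jensen's inequality for `f` with weights proportional to `w i * b i`
makes the perspective jointly convex: `(∑ w a) ^ α (∑ w b) ^ (1 - α) ≤ ∑ w a ^ α b ^ (1 - α)`.
Applying this for each output `y` with weights `T x y` and summing over `y`, the column sums
`∑ y, T x y = 1` give the data processing inequality.
-/

open Finset Real

theorem ConvexOn.sum_mul_mul_map_div_le {ι : Type*} {t : Finset ι} {s : Set ℝ} {f : ℝ → ℝ}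
    (hf : ConvexOn ℝ s f) {w a b : ι → ℝ} (hw : ∀ i ∈ t, 0 ≤ w i) (hb : ∀ i ∈ t, 0 < b i)
    (hab : ∀ i ∈ t, a i / b i ∈ s) :
    (∑ i ∈ t, w i * b i) * f ((∑ i ∈ t, w i * a i) / ∑ i ∈ t, w i * b i) ≤
      ∑ i ∈ t, w i * b i * f (a i / b i) := by
  have hwb : ∀ i ∈ t, 0 ≤ w i * b i := fun i hi => mul_nonneg (hw i hi) (hb i hi).le
  obtain hS | hS := (sum_nonneg hwb).eq_or_lt
  · have hwb0 : ∀ i ∈ t, w i * b i = 0 := (sum_eq_zero_iff_of_nonneg hwb).mp hS.symm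
    rw [← hS, zero_mul, sum_eq_zero fun i hi => by rw [hwb0 i hi, zero_mul]]
  set S := ∑ i ∈ t, w i * b i
  have jensen := hf.map_sum_le (w := fun i => w i * b i / S) (p := fun i => a i / b i)
    (fun i hi => div_nonneg (hwb i hi) hS.le) (by rw [← sum_div, div_self hS.ne']) hab
  have hmean : ∑ i ∈ t, (w i * b i / S) • (a i / b i) = (∑ i ∈ t, w i * a i) / S := by
    rw [sum_div]
    refine sum_congr rfl fun i hi => ?_
    rw [smul_eq_mul]
    field_simp [(hb i hi).ne']
  rw [hmean] at jensen
  calc S * f ((∑ i ∈ t, w i * a i) / S)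
      ≤ S * ∑ i ∈ t, (w i * b i / S) • f (a i / b i) := mul_le_mul_of_nonneg_left jensen hS.le
    _ = ∑ i ∈ t, w i * b i * f (a i / b i) := by
      rw [mul_sum]
      refine sum_congr rfl fun i _ => ?_
      rw [smul_eq_mul]
      field_simp

theorem rpow_mul_rpow_one_sub_eq_mul_div_rpow {a b α : ℝ} (ha : 0 ≤ a) (hb : 0 < b) :
    a ^ α * b ^ (1 - α) = b * (a / b) ^ α := by
  rw [div_rpow ha hb.le, rpow_sub hb, rpow_one]
  field_simp

theorem sum_mul_rpow_mul_sum_mul_rpow_one_sub_le {ι : Type*} {t : Finset ι} {w a b : ι → ℝ}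
    (hw : ∀ i ∈ t, 0 ≤ w i) (ha : ∀ i ∈ t, 0 ≤ a i) (hb : ∀ i ∈ t, 0 < b i) {α : ℝ}
    (hα : 1 < α) :
    (∑ i ∈ t, w i * a i) ^ α * (∑ i ∈ t, w i * b i) ^ (1 - α) ≤
      ∑ i ∈ t, w i * (a i ^ α * b i ^ (1 - α)) := by
  have hrhs : 0 ≤ ∑ i ∈ t, w i * (a i ^ α * b i ^ (1 - α)) := sum_nonneg fun i hi =>
    mul_nonneg (hw i hi) (mul_nonneg (rpow_nonneg (ha i hi) _) (rpow_nonneg (hb i hi).le _))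
  obtain hS | hS := (sum_nonneg fun i hi => mul_nonneg (hw i hi) (hb i hi).le).eq_or_lt
  -- `0 ^ (1 - α) = 0` in Mathlib, so a vanishing `∑ w b` makes the left side `0`.
  · rwa [← hS, zero_rpow (by linarith), mul_zero]
  have hperspective := (convexOn_rpow hα.le).sum_mul_mul_map_div_le hw hb
    fun i hi => div_nonneg (ha i hi) (hb i hi).le
  have hwa : 0 ≤ ∑ i ∈ t, w i * a i := sum_nonneg fun i hi => mul_nonneg (hw i hi) (ha i hi)
  rw [rpow_mul_rpow_one_sub_eq_mul_div_rpow hwa hS]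
  refine hperspective.trans_eq (sum_congr rfl fun i hi => ?_)
  rw [rpow_mul_rpow_one_sub_eq_mul_div_rpow (ha i hi) (hb i hi), mul_assoc]

theorem renyi_divergence_data_processing_general {X Y : Type*} [Fintype X] [Fintype Y]
    (p q : X → NNReal)
    (hqpos : ∀ x, 0 < q x)
    (T : X → Y → NNReal) (hT : ∀ x, ∑ y, T x y = 1)
    (α : ℝ) (hα : α ∈ Set.Ioc (1 : ℝ) 2) :
    ∑ y, (∑ x, (T x y : ℝ) * (p x : ℝ)) ^ α * (∑ x, (T x y : ℝ) * (q x : ℝ)) ^ (1 - α) ≤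
      ∑ x, (p x : ℝ) ^ α * (q x : ℝ) ^ (1 - α) := by
  have hT' : ∀ x, ∑ y, (T x y : ℝ) = 1 := fun x => by exact_mod_cast hT x
  calc ∑ y, (∑ x, (T x y : ℝ) * (p x : ℝ)) ^ α * (∑ x, (T x y : ℝ) * (q x : ℝ)) ^ (1 - α)
      ≤ ∑ y, ∑ x, (T x y : ℝ) * ((p x : ℝ) ^ α * (q x : ℝ) ^ (1 - α)) :=
        sum_le_sum fun y _ => sum_mul_rpow_mul_sum_mul_rpow_one_sub_le
          (fun x _ => (T x y).coe_nonneg) (fun x _ => (p x).coe_nonneg)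
          (fun x _ => NNReal.coe_pos.mpr (hqpos x)) hα.1
    _ = ∑ x, (p x : ℝ) ^ α * (q x : ℝ) ^ (1 - α) := by
        simp only [sum_comm (γ := Y), ← sum_mul, hT', one_mul]

/-- Classical data processing inequality for Rényi divergences with `α ∈ (1,2]`:
applying a stochastic map cannot increase `Σ p^α q^{1−α}`. -/
theorem renyi_divergence_data_processing {X Y : Type*} [Fintype X] [Fintype Y]
    (p q : X → NNReal) (hp : ∑ x, p x = 1) (hq : ∑ x, q x = 1)
    (hqpos : ∀ x, 0 < q x)
    (T : X → Y → NNReal) (hT : ∀ x, ∑ y, T x y = 1)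
    (hTq : ∀ y, 0 < ∑ x, T x y * q x)
    (α : ℝ) (hα : α ∈ Set.Ioc (1 : ℝ) 2) :
    ∑ y, (∑ x, (T x y : ℝ) * (p x : ℝ)) ^ α * (∑ x, (T x y : ℝ) * (q x : ℝ)) ^ (1 - α) ≤
      ∑ x, (p x : ℝ) ^ α * (q x : ℝ) ^ (1 - α) :=
  renyi_divergence_data_processing_general p q hqpos T hT α hα
end

section
/- For a probability distribution P on a finite set X and α ∈ (1, 1 + ln 3/(4·ln η)) where η = 2^{−H_{3/2}(X)/2} + 2^{H_{1/2}(X)/2} + 1, the Rényi entropy satisfies H_α(X) ≥ H(X) − 4(α−1)·(log₂ η)², where H is the Shannon entropy. -/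
/-!
Write `α = 1 + t`. Since `t log p ≤ 0`, `p ^ α = p exp (t log p) ≤ p (1 + t log p + t² log² p / 2)`;
summing and using `log y ≤ y - 1` gives `H_α ≥ H - t / (2 ln 2) · ∑ p ln² p`.
For the second moment put `s = √p` and `v = s + s⁻¹ + 1`. Then `|ln p| = 2 |ln s| ≤ 2 ln v`, and
`v ≥ 3 > e`, so Jensen's inequality for `ln²`, which is concave on `[e, ∞)`, gives
`∑ p ln² p ≤ 4 (ln ∑ p v)²`. Finally `∑ p v = ∑ p^{3/2} + ∑ p^{1/2} + 1 = η`.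
-/

open Real Finset

namespace Real

theorem exp_le_quadratic_of_nonpos {u : ℝ} (hu : u ≤ 0) : exp u ≤ 1 + u + u ^ 2 / 2 := by
  have hneg : 1 - u + u ^ 2 / 2 ≤ exp (-u) := by
    simpa [sub_eq_add_neg] using quadratic_le_exp_of_nonneg (neg_nonneg.mpr hu)
  have hinv : exp u * exp (-u) = 1 := by rw [← exp_add, add_neg_cancel, exp_zero]
  -- `(1 + u + u²/2)(1 - u + u²/2) = 1 + u⁴/4 ≥ 1`
  nlinarith [exp_pos u, sq_nonneg (u ^ 2), sq_nonneg (u + 1)]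

theorem rpow_one_add_le_quadratic {p t : ℝ} (hp₀ : 0 < p) (hp₁ : p ≤ 1) (ht : 0 ≤ t) :
    p ^ (1 + t) ≤ p + t * (p * log p) + t ^ 2 / 2 * (p * log p ^ 2) := by
  have hexp : p ^ (1 + t) = p * exp (t * log p) := by
    rw [rpow_def_of_pos hp₀, mul_add, mul_one, exp_add, exp_log hp₀, mul_comm t]
  have hbound :=
    exp_le_quadratic_of_nonpos (mul_nonpos_of_nonneg_of_nonpos ht (log_nonpos hp₀.le hp₁))
  rw [hexp]
  nlinarith [mul_le_mul_of_nonneg_left hbound hp₀.le]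

theorem three_le_add_inv_add_one {s : ℝ} (hs : 0 < s) : 3 ≤ s + s⁻¹ + 1 := by
  have : 2 ≤ s + s⁻¹ := by
    rw [← sub_nonneg, show s + s⁻¹ - 2 = (s - 1) ^ 2 / s by field_simp; ring]
    positivity
  linarith

theorem abs_log_le_log_add_inv_add_one {s : ℝ} (hs : 0 < s) : |log s| ≤ log (s + s⁻¹ + 1) := by
  have hinv := inv_pos.mpr hs
  rw [abs_le, neg_le, ← log_inv]
  exact ⟨log_le_log hinv (by linarith), log_le_log hs (by linarith)⟩

theorem concaveOn_log_sq : ConcaveOn ℝ (Set.Ici (exp 1)) (fun x ↦ log x ^ 2) := by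
  refine concaveOn_of_hasDerivWithinAt2_nonpos (f' := fun x ↦ 2 * log x / x)
    (f'' := fun x ↦ (2 - 2 * log x) / x ^ 2) (convex_Ici _) ?_ ?_ ?_ ?_ <;>
    try simp only [interior_Ici, Set.mem_Ioi]
  · exact (continuousOn_log.mono fun x hx ↦ ((exp_pos 1).trans_le hx).ne').pow 2
  · intro x hx
    have hx₀ := (exp_pos 1).trans hx
    exact (((hasDerivAt_log hx₀.ne').fun_pow 2).congr_deriv (by field_simp; ring)).hasDerivWithinAt
  · intro x hx
    have hx₀ := (exp_pos 1).trans hx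
    exact ((((hasDerivAt_log hx₀.ne').const_mul 2).fun_div (hasDerivAt_id' x) hx₀.ne').congr_deriv
      (by field_simp)).hasDerivWithinAt
  · intro x hx
    have : 1 ≤ log x := (le_log_iff_exp_le ((exp_pos 1).trans hx)).mpr hx.le
    exact div_nonpos_of_nonpos_of_nonneg (by linarith) (sq_nonneg x)

end Real

section Entropy

variable {X : Type*} [Fintype X]

-- At `α = 1` this is `0` (as `1 / 0 = 0`), not the Shannon entropy.
noncomputable def renyiEntropy (p : X → ℝ) (α : ℝ) : ℝ := 1 / (1 - α) * logb 2 (∑ x, p x ^ α)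

noncomputable def shannonEntropy (p : X → ℝ) : ℝ := -∑ x, p x * logb 2 (p x)

theorem rpow_mul_renyiEntropy {p : X → ℝ} {α : ℝ} (hα : α ≠ 1) (h : 0 < ∑ x, p x ^ α) :
    (2 : ℝ) ^ ((1 - α) * renyiEntropy p α) = ∑ x, p x ^ α := by
  rw [renyiEntropy, ← mul_assoc, mul_one_div_cancel (sub_ne_zero.mpr hα.symm), one_mul,
    rpow_logb two_pos (by norm_num) h]

theorem sum_rpow_pos_s17 {p : X → ℝ} (hp : ∀ x, 0 < p x) (hsum : ∑ x, p x = 1) (β : ℝ) :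
    0 < ∑ x, p x ^ β :=
  sum_pos (fun x _ ↦ rpow_pos_of_pos (hp x) β)
    (nonempty_of_sum_ne_zero (f := p) (by rw [hsum]; exact one_ne_zero))

theorem shannonEntropy_sub_le_renyiEntropy {p : X → ℝ} (hp : ∀ x, 0 < p x)
    (hsum : ∑ x, p x = 1) {α : ℝ} (hα : 1 < α) :
    shannonEntropy p - (α - 1) / (2 * log 2) * ∑ x, p x * log (p x) ^ 2 ≤ renyiEntropy p α := by
  set t := α - 1 with ht
  have ht₀ : 0 < t := by linarith
  set A := ∑ x, p x * log (p x)
  set W := ∑ x, p x * log (p x) ^ 2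
  have hp₁ : ∀ x, p x ≤ 1 := fun x ↦
    hsum ▸ single_le_sum (fun y _ ↦ (hp y).le) (mem_univ x)
  have hsum_le : ∑ x, p x ^ α ≤ 1 + t * A + t ^ 2 / 2 * W := by
    calc ∑ x, p x ^ α
        ≤ ∑ x, (p x + t * (p x * log (p x)) + t ^ 2 / 2 * (p x * log (p x) ^ 2)) :=
          sum_le_sum fun x _ ↦ by simpa [ht] using rpow_one_add_le_quadratic (hp x) (hp₁ x) ht₀.le
      _ = 1 + t * A + t ^ 2 / 2 * W := by
          rw [sum_add_distrib, sum_add_distrib, hsum, mul_sum, mul_sum]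
  have hlog : log (∑ x, p x ^ α) ≤ t * A + t ^ 2 / 2 * W := by
    linarith [log_le_sub_one_of_pos (sum_rpow_pos_s17 hp hsum α)]
  have hrenyi : renyiEntropy p α = -log (∑ x, p x ^ α) / (t * log 2) := by
    rw [renyiEntropy, logb, show 1 - α = -t by ring]
    field_simp
  have hshannon : shannonEntropy p = -A / log 2 := by
    simp only [shannonEntropy, logb, A, ← mul_div_assoc, ← sum_div, neg_div]
  rw [hrenyi, hshannon, le_div_iff₀ (by positivity)]
  have hexpand : (-A / log 2 - t / (2 * log 2) * W) * (t * log 2) = -(t * A + t ^ 2 / 2 * W) := by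
    field_simp
    ring
  linarith

theorem sum_mul_log_sq_le {p : X → ℝ} (hp : ∀ x, 0 < p x) (hsum : ∑ x, p x = 1) :
    ∑ x, p x * log (p x) ^ 2 ≤
      4 * log (∑ x, p x ^ (3 / 2 : ℝ) + ∑ x, p x ^ (1 / 2 : ℝ) + 1) ^ 2 := by
  set s : X → ℝ := fun x ↦ p x ^ (1 / 2 : ℝ)
  set v : X → ℝ := fun x ↦ s x + (s x)⁻¹ + 1
  have hs : ∀ x, 0 < s x := fun x ↦ rpow_pos_of_pos (hp x) _
  have hss : ∀ x, s x * s x = p x := fun x ↦ by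
    rw [← rpow_add (hp x)]; norm_num
  have hlog_sq : ∀ x, log (p x) ^ 2 ≤ 4 * log (v x) ^ 2 := fun x ↦ by
    have h := abs_log_le_log_add_inv_add_one (hs x)
    rw [← hss, log_mul (hs x).ne' (hs x).ne', ← sq_abs, ← two_mul, abs_mul, abs_two]
    nlinarith [abs_nonneg (log (s x))]
  have hweighted : ∑ x, p x * v x = ∑ x, p x ^ (3 / 2 : ℝ) + ∑ x, p x ^ (1 / 2 : ℝ) + 1 := by
    have hterm : ∀ x, p x * v x = p x ^ (3 / 2 : ℝ) + p x ^ (1 / 2 : ℝ) + p x := fun x ↦ by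
      have hinv : p x * (s x)⁻¹ = s x := by
        rw [← hss x, mul_assoc, mul_inv_cancel₀ (hs x).ne', mul_one]
      rw [show (3 / 2 : ℝ) = 1 + 1 / 2 by norm_num, rpow_add (hp x), rpow_one]
      simp only [v, mul_add, hinv, mul_one]
      rfl
    rw [sum_congr rfl fun x _ ↦ hterm x, sum_add_distrib, sum_add_distrib, hsum]
  have hjensen : ∑ x, p x * log (v x) ^ 2 ≤ log (∑ x, p x * v x) ^ 2 := by
    have hv : ∀ x ∈ univ, v x ∈ Set.Ici (exp 1) := fun x _ ↦
      (exp_one_lt_d9.trans (by norm_num)).le.trans (three_le_add_inv_add_one (hs x))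
    simpa using concaveOn_log_sq.le_map_sum (fun x _ ↦ (hp x).le) hsum hv
  calc ∑ x, p x * log (p x) ^ 2
      ≤ ∑ x, p x * (4 * log (v x) ^ 2) := sum_le_sum fun x _ ↦
        mul_le_mul_of_nonneg_left (hlog_sq x) (hp x).le
    _ = 4 * ∑ x, p x * log (v x) ^ 2 := by rw [mul_sum]; ring_nf
    _ ≤ _ := by rw [← hweighted]; linarith

theorem shannonEntropy_sub_four_mul_logb_sq_le_renyiEntropy {p : X → ℝ} (hp : ∀ x, 0 < p x)
    (hsum : ∑ x, p x = 1) {α : ℝ} (hα : 1 < α) :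
    shannonEntropy p - 4 * (α - 1) *
        logb 2 (2 ^ (-renyiEntropy p (3 / 2) / 2) + 2 ^ (renyiEntropy p (1 / 2) / 2) + 1) ^ 2 ≤
      renyiEntropy p α := by
  have hη : (2 : ℝ) ^ (-renyiEntropy p (3 / 2) / 2) + 2 ^ (renyiEntropy p (1 / 2) / 2) + 1 =
      ∑ x, p x ^ (3 / 2 : ℝ) + ∑ x, p x ^ (1 / 2 : ℝ) + 1 := by
    rw [show -renyiEntropy p (3 / 2) / 2 = (1 - 3 / 2) * renyiEntropy p (3 / 2) by ring,
      show renyiEntropy p (1 / 2) / 2 = (1 - 1 / 2) * renyiEntropy p (1 / 2) by ring,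
      rpow_mul_renyiEntropy (by norm_num) (sum_rpow_pos_s17 hp hsum _),
      rpow_mul_renyiEntropy (by norm_num) (sum_rpow_pos_s17 hp hsum _)]
  set η := ∑ x, p x ^ (3 / 2 : ℝ) + ∑ x, p x ^ (1 / 2 : ℝ) + 1
  have hW : ∑ x, p x * log (p x) ^ 2 ≤ 4 * log η ^ 2 := sum_mul_log_sq_le hp hsum
  rw [hη]
  have hlog2 : 0 < log 2 := log_pos one_lt_two
  have hlog2' : log 2 ≤ 2 := (log_two_lt_d9.trans (by norm_num)).le
  have hα₀ : 0 ≤ α - 1 := by linarith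
  have hmoment : (α - 1) / (2 * log 2) * ∑ x, p x * log (p x) ^ 2 ≤ 4 * (α - 1) * logb 2 η ^ 2 :=
    calc (α - 1) / (2 * log 2) * ∑ x, p x * log (p x) ^ 2
        ≤ (α - 1) / (2 * log 2) * (4 * log η ^ 2) := mul_le_mul_of_nonneg_left hW (by positivity)
      _ = 4 * (α - 1) * logb 2 η ^ 2 * (log 2 / 2) := by rw [logb]; field_simp
      _ ≤ 4 * (α - 1) * logb 2 η ^ 2 :=
        mul_le_of_le_one_right (by positivity) ((div_le_one two_pos).mpr hlog2')
  linarith [shannonEntropy_sub_le_renyiEntropy hp hsum hα]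

end Entropy

theorem renyi_entropy_lower_bound_general {X : Type*} [Fintype X]
    (P : X → NNReal) (hP : ∑ x, P x = 1) (hpos : ∀ x, 0 < P x)
    (η : ℝ)
    (hη : η = (2 : ℝ) ^
        (-((1 / (1 - (3 / 2 : ℝ))) * Real.logb 2 (∑ x, (P x : ℝ) ^ (3 / 2 : ℝ))) / 2)
      + (2 : ℝ) ^
        (((1 / (1 - (1 / 2 : ℝ))) * Real.logb 2 (∑ x, (P x : ℝ) ^ (1 / 2 : ℝ))) / 2) + 1)
    (α : ℝ) (hα : 1 < α) :
    (1 / (1 - α)) * Real.logb 2 (∑ x, (P x : ℝ) ^ α) ≥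
      (- ∑ x, (P x : ℝ) * Real.logb 2 (P x : ℝ)) - 4 * (α - 1) * (Real.logb 2 η) ^ 2 := by
  subst hη
  exact shannonEntropy_sub_four_mul_logb_sq_le_renyiEntropy (p := fun x ↦ P x) (fun x ↦ hpos x)
    (by exact_mod_cast hP) hα

/-- Lower bound on the Rényi entropy in terms of the Shannon entropy for `α` close to `1`
(classical case of Lemma 6): `H_α(X) ≥ H(X) − 4(α−1)(log₂ η)²` for
`1 < α < 1 + ln 3/(4 ln η)`, where `η = 2^{−H_{3/2}/2} + 2^{H_{1/2}/2} + 1`. -/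
theorem renyi_entropy_lower_bound {X : Type*} [Fintype X] [Nonempty X]
    (P : X → NNReal) (hP : ∑ x, P x = 1) (hpos : ∀ x, 0 < P x)
    (η : ℝ)
    (hη : η = (2 : ℝ) ^
        (-((1 / (1 - (3 / 2 : ℝ))) * Real.logb 2 (∑ x, (P x : ℝ) ^ (3 / 2 : ℝ))) / 2)
      + (2 : ℝ) ^
        (((1 / (1 - (1 / 2 : ℝ))) * Real.logb 2 (∑ x, (P x : ℝ) ^ (1 / 2 : ℝ))) / 2) + 1)
    (α : ℝ) (hα : 1 < α) (hα' : α < 1 + Real.log 3 / (4 * Real.log η)) :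
    (1 / (1 - α)) * Real.logb 2 (∑ x, (P x : ℝ) ^ α) ≥
      (- ∑ x, (P x : ℝ) * Real.logb 2 (P x : ℝ)) - 4 * (α - 1) * (Real.logb 2 η) ^ 2 :=
  renyi_entropy_lower_bound_general P hP hpos η hη α hα
end

section
/- For β ∈ ℝ with |β| ≤ 1/4, (1/(β·ln 2))·(2(cosh(2β·ln η) − 1)) < 4β·(log₂ η)² for all η > 3 and β > 0; more precisely, for 0 < 2β ≤ 1/2 and η ≥ 3, (1/(β ln 2))·s_{2β}(η) ≤ 4β (log₂ η)² ln 2 · cosh(2β ln η) < 4β (log₂ η)², using ln 2 · cosh((ln 3)/2) < 1. -/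
/-!
Put `x = 2β ln η ≥ 0`. Since `x² / (β ln 2) = 4β (log₂ η)² ln 2`, the first inequality is
`2 (cosh x - 1) ≤ x² cosh x`, which follows from `2 (cosh x - 1) = 4 sinh² (x/2)` and the mean
value bound `|sinh t| ≤ |t| cosh t`. The strict one holds because `x ≤ (ln 3)/2` gives
`ln 2 · cosh x ≤ ln 2 · cosh ((ln 3)/2) < 1`.
-/

open Real Set

namespace Real

theorem sinh_le_mul_cosh {t : ℝ} (ht : 0 ≤ t) : sinh t ≤ t * cosh t := by
  have hderiv_le : ∀ x ∈ interior (Icc 0 t), deriv sinh x ≤ cosh t := by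
    intro x hx
    rw [interior_Icc] at hx
    rw [deriv_sinh, cosh_le_cosh, abs_of_pos hx.1, abs_of_nonneg ht]
    exact hx.2.le
  have := (convex_Icc 0 t).image_sub_le_mul_sub_of_deriv_le continuous_sinh.continuousOn
    differentiable_sinh.differentiableOn hderiv_le 0 (left_mem_Icc.2 ht) t (right_mem_Icc.2 ht) ht
  simpa [mul_comm] using this

theorem sinh_sq_le_sq_mul_cosh_sq (t : ℝ) : sinh t ^ 2 ≤ t ^ 2 * cosh t ^ 2 := by
  rcases le_total 0 t with ht | ht
  · have h := sinh_le_mul_cosh ht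
    have h0 : 0 ≤ sinh t := sinh_nonneg_iff.2 ht
    nlinarith
  · have h := sinh_le_mul_cosh (neg_nonneg.2 ht)
    have h0 : 0 ≤ sinh (-t) := sinh_nonneg_iff.2 (neg_nonneg.2 ht)
    rw [sinh_neg, cosh_neg] at h
    rw [sinh_neg] at h0
    nlinarith

theorem two_mul_cosh_sub_one_le (x : ℝ) : 2 * (cosh x - 1) ≤ x ^ 2 * cosh x := by
  have hhalf : cosh x = cosh (x / 2) ^ 2 + sinh (x / 2) ^ 2 := by
    rw [← cosh_two_mul, mul_div_cancel₀ x two_ne_zero]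
  have hsinh := sinh_sq_le_sq_mul_cosh_sq (x / 2)
  have hcosh := cosh_sq (x / 2)
  have hone := one_le_cosh x
  nlinarith [sq_nonneg x]

theorem cosh_half_log {a : ℝ} (ha : 0 < a) : cosh (log a / 2) = (√a + 1 / √a) / 2 := by
  rw [← log_sqrt ha.le, cosh_log (sqrt_pos.2 ha), one_div]

theorem log_two_mul_cosh_half_log_three_lt_one : log 2 * cosh (log 3 / 2) < 1 := by
  rw [cosh_half_log three_pos]
  have h3 : √3 ^ 2 = 3 := sq_sqrt (by norm_num)
  have hsqrt3 : √3 < 1.7321 := by nlinarith [sqrt_nonneg 3]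
  have hinv : 1 / √3 = √3 / 3 := by
    field_simp
    linarith
  rw [hinv]
  nlinarith [log_two_lt_d9, log_two_gt_d9]

end Real

theorem error_term_estimate_general (β η : ℝ) (hβ : 0 < β)
    (hη : 3 ≤ η) (hβη : 2 * β * Real.log η ≤ Real.log 3 / 2) :
    Real.log 2 * ((Real.sqrt 3 + 1 / Real.sqrt 3) / 2) < 1 ∧
    (1 / (β * Real.log 2)) * (2 * (Real.cosh (2 * β * Real.log η) - 1)) ≤
      4 * β * (Real.logb 2 η) ^ 2 * Real.log 2 * Real.cosh (2 * β * Real.log η) ∧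
    4 * β * (Real.logb 2 η) ^ 2 * Real.log 2 * Real.cosh (2 * β * Real.log η) <
      4 * β * (Real.logb 2 η) ^ 2 := by
  have hlogη : 0 < log η := log_pos (by linarith)
  set x := 2 * β * log η with hx
  have hx0 : 0 ≤ x := by positivity
  have hnum := log_two_mul_cosh_half_log_three_lt_one
  refine ⟨cosh_half_log three_pos ▸ hnum, ?_, ?_⟩
  · calc 1 / (β * log 2) * (2 * (cosh x - 1))
        ≤ 1 / (β * log 2) * (x ^ 2 * cosh x) := by
          have := log_pos one_lt_two
          exact mul_le_mul_of_nonneg_left (two_mul_cosh_sub_one_le x) (by positivity)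
      _ = 4 * β * logb 2 η ^ 2 * log 2 * cosh x := by
          rw [hx, logb]
          field_simp
          norm_num
  · have hcosh : log 2 * cosh x < 1 := by
      calc log 2 * cosh x ≤ log 2 * cosh (log 3 / 2) := by
            gcongr
            rw [cosh_le_cosh, abs_of_nonneg hx0, abs_of_nonneg (by positivity)]
            exact hβη
        _ < 1 := hnum
    have hpos : 0 < 4 * β * logb 2 η ^ 2 := by
      have : 0 < logb 2 η := logb_pos (by norm_num) (by linarith)
      positivity
    calc 4 * β * logb 2 η ^ 2 * log 2 * cosh x
        = 4 * β * logb 2 η ^ 2 * (log 2 * cosh x) := by ring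
      _ < 4 * β * logb 2 η ^ 2 := mul_lt_of_lt_one_right hpos hcosh

/-- Error-term estimate from the proof of Lemma 6: with `s_γ(t) = 2(cosh(γ ln t) − 1)`,
for `0 < 2β ≤ 1/2`, `η ≥ 3` and `2β ln η ≤ (ln 3)/2` one has
`(1/(β ln 2))·s_{2β}(η) ≤ 4β (log₂ η)² ln 2 · cosh(2β ln η) < 4β (log₂ η)²`,
using the numerical fact `ln 2 · cosh((ln 3)/2) = ln 2 · (√3 + 1/√3)/2 < 1`. -/
theorem error_term_estimate (β η : ℝ) (hβ : 0 < β) (hβ' : 2 * β ≤ 1 / 2)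
    (hη : 3 ≤ η) (hβη : 2 * β * Real.log η ≤ Real.log 3 / 2) :
    Real.log 2 * ((Real.sqrt 3 + 1 / Real.sqrt 3) / 2) < 1 ∧
    (1 / (β * Real.log 2)) * (2 * (Real.cosh (2 * β * Real.log η) - 1)) ≤
      4 * β * (Real.logb 2 η) ^ 2 * Real.log 2 * Real.cosh (2 * β * Real.log η) ∧
    4 * β * (Real.logb 2 η) ^ 2 * Real.log 2 * Real.cosh (2 * β * Real.log η) <
      4 * β * (Real.logb 2 η) ^ 2 :=
  error_term_estimate_general β η hβ hη hβη
end
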